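/- Let ω = (−1+√3 i)/2, so that −ω² = (1+√3 i)/2 and ω both lie in the upper half-plane. Then λ(−ω²) = −ω², i.e. λ((1+√3 i)/2) = (1+√3 i)/2, and λ(ω) = −ω, i.e. λ((−1+√3 i)/2) = (1−√3 i)/2. -/

import Mathlib

noncomputable def theta00 (τ : ℂ) : ℂ :=
  ∑' n : ℤ, Complex.exp (Real.pi * Complex.I * (n : ℂ) ^ 2 * τ)

/-- Theta constant `θ01(τ) = ∑_{n∈ℤ} (−1)ⁿ exp(πi n² τ)`. -/
noncomputable def theta01 (τ : ℂ) : ℂ :=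
  ∑' n : ℤ, (-1 : ℂ) ^ n * Complex.exp (Real.pi * Complex.I * (n : ℂ) ^ 2 * τ)

/-- Theta constant `θ10(τ) = ∑_{n∈ℤ} exp(πi (n+1/2)² τ)`. -/
noncomputable def theta10 (τ : ℂ) : ℂ :=
  ∑' n : ℤ, Complex.exp (Real.pi * Complex.I * ((n : ℂ) + 1/2) ^ 2 * τ)

/-- The lambda function `λ(τ) = θ10(τ)⁴ / θ00(τ)⁴`. -/
noncomputable def lambdaFn (τ : ℂ) : ℂ := theta10 τ ^ 4 / theta00 τ ^ 4

/-- `ω = (−1 + √3 i)/2`, the primitive cube root of unity in the upper half-plane. -/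
noncomputable def omegaC : ℂ := (-1 + Real.sqrt 3 * Complex.I) / 2

/-!
The cube root of unity `ω` is fixed by the modular transformation `τ ↦ -1/τ - 1`, that is
`-1/ω = ω + 1`. Writing `c = √(-iω)`, the transformations `θ00(τ + 1) = θ01(τ)`,
`θ01(τ + 1) = θ00(τ)`, `θ00(-1/τ) = √(-iτ) θ00(τ)` and `θ01(-1/τ) = √(-iτ) θ10(τ)` give
`θ01(ω) = c θ00(ω)` and `θ00(ω) = c θ10(ω)`. Hence `λ(ω) = c⁻⁴ = -ω⁻² = -ω` and, since
`θ10(τ + 1)⁴ = -θ10(τ)⁴`, `λ(ω + 1) = -c⁻⁸ = -ω⁻¹ = ω + 1 = -ω²`. The quotients make sense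
because `θ00(ω) ≠ 0`, which follows from `|θ00(τ) - 1| ≤ 2q/(1 - q)` with `q = e^{-π Im τ}`.
-/

open Complex
open scoped Real

lemma exp_pi_mul_I_mul_intCast (n : ℤ) : cexp (π * I * n) = (-1) ^ n := by
  rw [mul_comm, exp_int_mul, exp_pi_mul_I]

lemma exp_pi_mul_I_mul_intCast_sq (n : ℤ) : cexp (π * I * (n : ℂ) ^ 2) = (-1) ^ n := by
  rw [← Int.cast_pow, exp_pi_mul_I_mul_intCast]
  rcases n.even_or_odd with h | h
  · rw [h.neg_one_zpow, (h.pow_of_ne_zero two_ne_zero).neg_one_zpow]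
  · rw [h.neg_one_zpow, h.pow.neg_one_zpow]

lemma theta00_eq_jacobiTheta₂ (τ : ℂ) : theta00 τ = jacobiTheta₂ 0 τ :=
  tsum_congr fun n => by simp [jacobiTheta₂_term]

lemma theta01_eq_jacobiTheta₂ (τ : ℂ) : theta01 τ = jacobiTheta₂ (1 / 2) τ :=
  tsum_congr fun n => by
    rw [jacobiTheta₂_term, exp_add, ← exp_pi_mul_I_mul_intCast n]
    ring_nf

lemma theta10_eq_jacobiTheta₂ (τ : ℂ) :
    theta10 τ = cexp (π * I * τ / 4) * jacobiTheta₂ (τ / 2) τ := by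
  rw [jacobiTheta₂, ← tsum_mul_left]
  refine tsum_congr fun n => ?_
  rw [jacobiTheta₂_term, ← exp_add]
  ring_nf

lemma theta00_add_one (τ : ℂ) : theta00 (τ + 1) = theta01 τ :=
  tsum_congr fun n => by rw [mul_add, exp_add, mul_one, exp_pi_mul_I_mul_intCast_sq, mul_comm]

lemma theta01_add_one (τ : ℂ) : theta01 (τ + 1) = theta00 τ :=
  tsum_congr fun n => by
    rw [mul_add, exp_add, mul_one, exp_pi_mul_I_mul_intCast_sq, mul_left_comm, ← mul_zpow,
      neg_one_mul, neg_neg, one_zpow, mul_one]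

lemma theta10_add_one (τ : ℂ) : theta10 (τ + 1) = cexp (π * I / 4) * theta10 τ := by
  rw [theta10, theta10, ← tsum_mul_left]
  refine tsum_congr fun n => ?_
  have : π * I * ((n : ℂ) + 1 / 2) ^ 2 * (τ + 1)
      = π * I / 4 + π * I * ((n : ℂ) + 1 / 2) ^ 2 * τ + π * I * ((n * (n + 1) : ℤ) : ℂ) := by
    push_cast; ring
  rw [this, exp_add, exp_add, exp_pi_mul_I_mul_intCast, (Int.even_mul_succ_self n).neg_one_zpow,
    mul_one]

lemma theta10_add_one_pow_four (τ : ℂ) : theta10 (τ + 1) ^ 4 = -theta10 τ ^ 4 := by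
  rw [theta10_add_one, mul_pow, ← exp_nat_mul, Nat.cast_ofNat,
    mul_div_cancel₀ _ (by norm_num : (4 : ℂ) ≠ 0), exp_pi_mul_I, neg_one_mul]

lemma theta00_neg_inv {τ : ℂ} (hτ : τ ≠ 0) :
    theta00 (-1 / τ) = (-I * τ) ^ (1 / 2 : ℂ) * theta00 τ := by
  have hc : (-I * τ) ^ (1 / 2 : ℂ) ≠ 0 := by simp [cpow_eq_zero_iff, hτ]
  rw [theta00_eq_jacobiTheta₂ τ, jacobiTheta₂_functional_equation, theta00_eq_jacobiTheta₂]
  field_simp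
  simp

lemma theta01_neg_inv {τ : ℂ} (hτ : τ ≠ 0) :
    theta01 (-1 / τ) = (-I * τ) ^ (1 / 2 : ℂ) * theta10 τ := by
  have hc : (-I * τ) ^ (1 / 2 : ℂ) ≠ 0 := by simp [cpow_eq_zero_iff, hτ]
  rw [theta10_eq_jacobiTheta₂, jacobiTheta₂_functional_equation, theta01_eq_jacobiTheta₂]
  have hz : τ / 2 / τ = 1 / 2 := by field_simp
  have hexp : -π * I * (τ / 2) ^ 2 / τ = -(π * I * τ / 4) := by field_simp; ring
  rw [hz, hexp, exp_neg]
  field_simp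

lemma cpow_one_half_sq (z : ℂ) : (z ^ (1 / 2 : ℂ)) ^ 2 = z := by
  rw [one_div, cpow_ofNat_inv_pow]

section CubeRootOfUnity

variable {τ : ℂ} (hτ : τ ^ 2 + τ + 1 = 0)
include hτ

lemma ne_zero_of_sq_add_self_add_one : τ ≠ 0 := by
  rintro rfl
  norm_num at hτ

lemma neg_one_div_eq_add_one_of_sq_add_self_add_one : -1 / τ = τ + 1 := by
  rw [div_eq_iff (ne_zero_of_sq_add_self_add_one hτ)]
  linear_combination -hτ

lemma theta01_eq_mul_theta00_of_sq_add_self_add_one :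
    theta01 τ = (-I * τ) ^ (1 / 2 : ℂ) * theta00 τ := by
  rw [← theta00_add_one, ← neg_one_div_eq_add_one_of_sq_add_self_add_one hτ,
    theta00_neg_inv (ne_zero_of_sq_add_self_add_one hτ)]

lemma theta00_eq_mul_theta10_of_sq_add_self_add_one :
    theta00 τ = (-I * τ) ^ (1 / 2 : ℂ) * theta10 τ := by
  rw [← theta01_add_one, ← neg_one_div_eq_add_one_of_sq_add_self_add_one hτ,
    theta01_neg_inv (ne_zero_of_sq_add_self_add_one hτ)]

lemma theta10_ne_zero_of_sq_add_self_add_one (h0 : theta00 τ ≠ 0) : theta10 τ ≠ 0 := by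
  rintro h
  simp [theta00_eq_mul_theta10_of_sq_add_self_add_one hτ, h] at h0

lemma lambdaFn_eq_neg_self_of_sq_add_self_add_one (h0 : theta00 τ ≠ 0) : lambdaFn τ = -τ := by
  set c := (-I * τ) ^ (1 / 2 : ℂ)
  have hc2 : c ^ 2 = -I * τ := cpow_one_half_sq _
  have h00 := theta00_eq_mul_theta10_of_sq_add_self_add_one hτ
  have h10 := theta10_ne_zero_of_sq_add_self_add_one hτ h0
  have hτ0 := ne_zero_of_sq_add_self_add_one hτ
  rw [lambdaFn, h00, mul_pow, show c ^ 4 = (c ^ 2) ^ 2 by ring, hc2,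
    neg_mul, neg_sq, mul_pow, I_sq]
  field_simp
  linear_combination (τ - 1) * hτ

lemma lambdaFn_add_one_eq_self_of_sq_add_self_add_one (h0 : theta00 τ ≠ 0) :
    lambdaFn (τ + 1) = τ + 1 := by
  set c := (-I * τ) ^ (1 / 2 : ℂ)
  have hc2 : c ^ 2 = -I * τ := cpow_one_half_sq _
  have h00 := theta00_eq_mul_theta10_of_sq_add_self_add_one hτ
  have h10 := theta10_ne_zero_of_sq_add_self_add_one hτ h0
  have hτ0 := ne_zero_of_sq_add_self_add_one hτ
  rw [lambdaFn, theta10_add_one_pow_four, theta00_add_one,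
    theta01_eq_mul_theta00_of_sq_add_self_add_one hτ, h00, ← mul_assoc, ← sq, mul_pow, hc2,
    neg_mul, Even.neg_pow ⟨2, rfl⟩, mul_pow, I_pow_four, one_mul]
  field_simp
  linear_combination -(τ ^ 3 - τ + 1) * hτ

end CubeRootOfUnity

lemma theta00_ne_zero_of_exp_lt {τ : ℂ} (h : rexp (-π * τ.im) < 1 / 3) : theta00 τ ≠ 0 := by
  have hτ : 0 < τ.im := by
    have := Real.exp_lt_one_iff.mp (h.trans (by norm_num))
    exact pos_of_mul_pos_right (by linarith) Real.pi_pos.le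
  intro h0
  have hq := norm_jacobiTheta_sub_one_le hτ
  rw [jacobiTheta_eq_jacobiTheta₂, ← theta00_eq_jacobiTheta₂, h0, zero_sub, norm_neg, norm_one,
    div_mul_eq_mul_div, le_div_iff₀ (by linarith)] at hq
  linarith

lemma omegaC_sq_add_omegaC_add_one : omegaC ^ 2 + omegaC + 1 = 0 := by
  have h3 : (√3 : ℂ) ^ 2 = 3 := by exact_mod_cast Real.sq_sqrt (by norm_num : (0 : ℝ) ≤ 3)
  rw [omegaC]
  linear_combination (√3 : ℂ) ^ 2 / 4 * I_sq - h3 / 4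

lemma theta00_omegaC_ne_zero : theta00 omegaC ≠ 0 := by
  have him : omegaC.im = √3 / 2 := by simp [omegaC]
  have hsqrt : 1.7 < √3 := by rw [Real.lt_sqrt (by norm_num)]; norm_num
  have hx : 2 < π * (√3 / 2) := by nlinarith [Real.pi_gt_three]
  apply theta00_ne_zero_of_exp_lt
  rw [him, neg_mul, Real.exp_neg, one_div]
  exact inv_strictAnti₀ (by norm_num) (by linarith [Real.add_one_le_exp (π * (√3 / 2))])

/-- Special values of lambda at the centers of gravity of Schwarz's triangles. -/
theorem lambda_omega_values :
    lambdaFn (-omegaC ^ 2) = -omegaC ^ 2 ∧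
    lambdaFn ((1 + Real.sqrt 3 * Complex.I) / 2) = (1 + Real.sqrt 3 * Complex.I) / 2 ∧
    lambdaFn omegaC = -omegaC ∧
    lambdaFn ((-1 + Real.sqrt 3 * Complex.I) / 2) = (1 - Real.sqrt 3 * Complex.I) / 2 := by
  have hω := omegaC_sq_add_omegaC_add_one
  have hω_self := lambdaFn_eq_neg_self_of_sq_add_self_add_one hω theta00_omegaC_ne_zero
  have hω_add_one := lambdaFn_add_one_eq_self_of_sq_add_self_add_one hω theta00_omegaC_ne_zero
  have hneg_sq : -omegaC ^ 2 = omegaC + 1 := by linear_combination -hω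
  have hadd : (1 + Real.sqrt 3 * Complex.I) / 2 = omegaC + 1 := by rw [omegaC]; ring
  have hneg : (1 - Real.sqrt 3 * Complex.I) / 2 = -omegaC := by rw [omegaC]; ring
  refine ⟨?_, ?_, hω_self, ?_⟩
  · rw [hneg_sq, hω_add_one]
  · rw [hadd, hω_add_one]
  · rw [hneg]; exact hω_self
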